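/- arXiv:1504.00852 — 4 statements merged into one kernel-verified Lean document; each statement's English description precedes it below -/
import Mathlib

section
/- Let R be a commutative ring, M a free R-module with basis (e₁, e₂) (so M has rank 2), and Q a quadratic form on M. Write ι : M → CliffordAlgebra Q for the canonical map, b = polar Q e₁ e₂, q₁ = Q e₁, q₂ = Q e₂, and π = ι e₁ * ι e₂. Then: (a) π * π = b • π − (q₁ * q₂) • 1; (b) the pair (1, π) is an R-basis of the even submodule evenOdd Q 0 of CliffordAlgebra Q; (c) reverse π = b • 1 − π. In particular, the even Clifford algebra of a binary quadratic form is a commutative R-algebra that is free of rank 2 as an R-module, and the reversal anti-automorphism restricts to the involution π ↦ b − π on it. -/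
/-!
Since `ι e₀ * ι e₁ + ι e₁ * ι e₀ = b`, the formulas for `π * π` and `reverse π` follow by moving
one generator past the other. Every product `ι m₁ * ι m₂` lies in `R ∙ 1 + R ∙ π`, and so does
`π * π`; hence this span is a commutative subalgebra containing the generators
`ι m₁ * ι m₂ * x` of the even part, so it is the even part. Linear independence of `1` and `π`
is seen in a representation on `R⁴` by explicit `4 × 4` matrices satisfying the Clifford
relations, in which `1` and `π` send the first basis vector to independent vectors.
-/

open CliffordAlgebra QuadraticMap Submodule

section SpanOnePair

variable {R A : Type*} [CommSemiring R] [Semiring A] [Algebra R A] {a x y : A}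

theorem commute_of_mem_span_one_pair (hx : x ∈ span R {1, a}) (hy : y ∈ span R {1, a}) :
    Commute x y := by
  obtain ⟨r, s, rfl⟩ := mem_span_pair.mp hx
  obtain ⟨r', s', rfl⟩ := mem_span_pair.mp hy
  have hxa : Commute (r • 1 + s • a) a :=
    ((Commute.one_left a).smul_left r).add_left ((Commute.refl a).smul_left s)
  exact ((Commute.one_right _).smul_right r').add_right (hxa.smul_right s')

theorem mul_mem_span_one_pair (ha : a * a ∈ span R {1, a}) (hx : x ∈ span R {1, a})
    (hy : y ∈ span R {1, a}) : x * y ∈ span R {1, a} := by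
  have hay : a * y ∈ span R {1, a} := by
    obtain ⟨r, s, rfl⟩ := mem_span_pair.mp hy
    rw [mul_add, mul_smul_comm, mul_smul_comm, mul_one]
    exact add_mem (smul_mem _ _ (subset_span (by simp))) (smul_mem _ _ ha)
  obtain ⟨r, s, rfl⟩ := mem_span_pair.mp hx
  rw [add_mul, smul_mul_assoc, smul_mul_assoc, one_mul]
  exact add_mem (smul_mem _ _ hy) (smul_mem _ _ hay)

end SpanOnePair

theorem QuadraticMap.map_smul_add_smul {R M N : Type*} [CommRing R] [AddCommGroup M] [Module R M]
    [AddCommGroup N] [Module R N] (Q : QuadraticMap R M N) (a b : R) (x y : M) :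
    Q (a • x + b • y) = (a * a) • Q x + (a * b) • polar Q x y + (b * b) • Q y := by
  rw [QuadraticMap.map_add Q, QuadraticMap.map_smul, QuadraticMap.map_smul, polar_smul_left,
    polar_smul_right, smul_smul]
  abel

namespace CliffordAlgebra

variable {R M : Type*} [CommRing R] [AddCommGroup M] [Module R M] (Q : QuadraticForm R M)

theorem mul_self_ι_mul_ι (x y : M) :
    (ι Q x * ι Q y) * (ι Q x * ι Q y) = polar Q x y • (ι Q x * ι Q y) - (Q x * Q y) • 1 := by
  rw [mul_ι_mul_ι_mul_comm, ι_sq_scalar, ι_sq_scalar, ← Algebra.smul_def,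
    ← map_mul (algebraMap R _), Algebra.algebraMap_eq_smul_one, polar_comm]

theorem reverse_ι_mul_ι (x y : M) :
    reverse (ι Q x * ι Q y) = polar Q x y • 1 - ι Q x * ι Q y := by
  rw [reverse.map_mul, reverse_ι, reverse_ι, ι_mul_ι_comm, polar_comm,
    Algebra.algebraMap_eq_smul_one]

variable (e : Module.Basis (Fin 2) R M)

theorem ι_mul_ι_mem_span_one_ι_mul_ι (m₁ m₂ : M) :
    ι Q m₁ * ι Q m₂ ∈ span R {1, ι Q (e 0) * ι Q (e 1)} := by
  have hbasis : ∀ i j, ι Q (e i) * ι Q (e j) ∈ span R {1, ι Q (e 0) * ι Q (e 1)} := by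
    have h1 : (1 : CliffordAlgebra Q) ∈ span R {1, ι Q (e 0) * ι Q (e 1)} :=
      subset_span (by simp)
    simp only [Fin.forall_fin_two]
    refine ⟨⟨?_, subset_span (Set.mem_insert_of_mem _ rfl)⟩, ?_, ?_⟩
    · simpa [ι_sq_scalar, Algebra.algebraMap_eq_smul_one] using smul_mem _ (Q (e 0)) h1
    · rw [ι_mul_ι_comm (Q := Q) (e 1), Algebra.algebraMap_eq_smul_one]
      exact sub_mem (smul_mem _ _ h1) (subset_span (Set.mem_insert_of_mem _ rfl))
    · simpa [ι_sq_scalar, Algebra.algebraMap_eq_smul_one] using smul_mem _ (Q (e 1)) h1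
  rw [← e.sum_repr m₁, ← e.sum_repr m₂, map_sum, map_sum, Finset.sum_mul_sum]
  exact sum_mem fun i _ => sum_mem fun j _ => by
    simpa only [map_smul, smul_mul_smul_comm] using smul_mem _ _ (hbasis i j)

theorem evenOdd_zero_eq_span : evenOdd Q 0 = span R {1, ι Q (e 0) * ι Q (e 1)} := by
  refine le_antisymm (fun x hx => ?_) (span_le.mpr ?_)
  · induction x, hx using even_induction with
    | algebraMap r =>
      rw [Algebra.algebraMap_eq_smul_one]
      exact smul_mem _ _ (subset_span (by simp))
    | add x y _ _ hx hy => exact add_mem hx hy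
    | ι_mul_ι_mul m₁ m₂ x _ hx =>
      refine mul_mem_span_one_pair ?_ (ι_mul_ι_mem_span_one_ι_mul_ι Q e _ _) hx
      rw [mul_self_ι_mul_ι]
      exact sub_mem (smul_mem _ _ (subset_span (Set.mem_insert_of_mem _ rfl)))
        (smul_mem _ _ (subset_span (Set.mem_insert _ _)))
  · rintro _ (rfl | rfl)
    · exact SetLike.one_mem_graded (evenOdd Q)
    · exact ι_mul_ι_mem_evenOdd_zero Q _ _

theorem commute_of_mem_evenOdd_zero (e : Module.Basis (Fin 2) R M) {x y : CliffordAlgebra Q}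
    (hx : x ∈ evenOdd Q 0) (hy : y ∈ evenOdd Q 0) : Commute x y := by
  rw [evenOdd_zero_eq_span Q e] at hx hy
  exact commute_of_mem_span_one_pair hx hy

theorem map_mul_self_eq_algebraMap_of_basis {A : Type*} [Ring A] [Algebra R A] (f : M →ₗ[R] A)
    (h₀ : f (e 0) * f (e 0) = algebraMap R A (Q (e 0)))
    (h₁ : f (e 1) * f (e 1) = algebraMap R A (Q (e 1)))
    (h₀₁ : f (e 0) * f (e 1) + f (e 1) * f (e 0) = algebraMap R A (polar Q (e 0) (e 1)))
    (m : M) : f m * f m = algebraMap R A (Q m) := by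
  obtain ⟨a, b, rfl⟩ : ∃ a b : R, a • e 0 + b • e 1 = m :=
    ⟨e.repr m 0, e.repr m 1, (Fin.sum_univ_two _).symm.trans (e.sum_repr m)⟩
  have hQ := congrArg (Algebra.linearMap R A) (Q.map_smul_add_smul a b (e 0) (e 1))
  simp only [map_add, map_smul, Algebra.linearMap_apply] at hQ
  rw [hQ, ← h₀, ← h₁, ← h₀₁, smul_add]
  simp only [map_add, map_smul, add_mul, mul_add, smul_mul_smul_comm, mul_comm b a]
  abel

/-- Left multiplication by `ι Q (e 0)` and `ι Q (e 1)` in the basis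
`(1, ι e₀, ι e₁, ι e₀ * ι e₁)` of the Clifford algebra. -/
noncomputable def ιMatrix : Fin 2 → Matrix (Fin 4) (Fin 4) R :=
  ![!![0, Q (e 0), 0, 0; 1, 0, 0, 0; 0, 0, 0, Q (e 0); 0, 0, 1, 0],
    !![0, polar Q (e 0) (e 1), Q (e 1), 0; 0, 0, 0, -Q (e 1); 1, 0, 0, polar Q (e 0) (e 1);
      0, -1, 0, 0]]

theorem ιMatrix_mul_self (i : Fin 2) :
    ιMatrix Q e i * ιMatrix Q e i = algebraMap R _ (Q (e i)) := by
  fin_cases i <;>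
    simp [ιMatrix, ← Matrix.ext_iff, Fin.forall_fin_succ, Matrix.algebraMap_matrix_apply]
  ring

theorem ιMatrix_mul_add_swap :
    ιMatrix Q e 0 * ιMatrix Q e 1 + ιMatrix Q e 1 * ιMatrix Q e 0 =
      algebraMap R _ (polar Q (e 0) (e 1)) := by
  simp [ιMatrix, ← Matrix.ext_iff, Fin.forall_fin_succ, Matrix.algebraMap_matrix_apply]
  ring

noncomputable def matrixRep : CliffordAlgebra Q →ₐ[R] Matrix (Fin 4) (Fin 4) R :=
  lift Q ⟨e.constr R (ιMatrix Q e), map_mul_self_eq_algebraMap_of_basis Q e _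
    (by simpa using ιMatrix_mul_self Q e 0) (by simpa using ιMatrix_mul_self Q e 1)
    (by simpa using ιMatrix_mul_add_swap Q e)⟩

theorem matrixRep_ι (i : Fin 2) : matrixRep Q e (ι Q (e i)) = ιMatrix Q e i := by
  simp [matrixRep]

theorem linearIndependent_one_ι_mul_ι : LinearIndependent R ![1, ι Q (e 0) * ι Q (e 1)] := by
  refine LinearIndependent.pair_iff.mpr fun s t hst => ?_
  have h := congrArg (matrixRep Q e) hst
  simp only [map_add, map_smul, map_mul, map_one, map_zero, matrixRep_ι] at h
  have h₀₀ := congrFun (congrFun h 0) 0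
  have h₃₀ := congrFun (congrFun h 3) 0
  simp [ιMatrix] at h₀₀ h₃₀
  exact ⟨h₀₀, h₃₀⟩

noncomputable def evenBasis : Module.Basis (Fin 2) R (evenOdd Q 0) :=
  (Module.Basis.span (linearIndependent_one_ι_mul_ι Q e)).map (LinearEquiv.ofEq _ _ (by
    rw [Matrix.range_cons_cons_empty, evenOdd_zero_eq_span Q e]))

theorem coe_evenBasis (i : Fin 2) :
    (evenBasis Q e i : CliffordAlgebra Q) = ![1, ι Q (e 0) * ι Q (e 1)] i := by
  simp [evenBasis]

end CliffordAlgebra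

/-- Even Clifford algebra of a binary quadratic form: multiplication law of
`π = ι e₁ * ι e₂`, freeness of rank 2 with basis `(1, π)`, the action of `reverse`,
and commutativity of the even part. -/
theorem stmt0 {R : Type*} [CommRing R] {M : Type*} [AddCommGroup M] [Module R M]
    (e : Module.Basis (Fin 2) R M) (Q : QuadraticForm R M) :
    (CliffordAlgebra.ι Q (e 0) * CliffordAlgebra.ι Q (e 1)) *
        (CliffordAlgebra.ι Q (e 0) * CliffordAlgebra.ι Q (e 1)) =
      QuadraticMap.polar Q (e 0) (e 1) •
          (CliffordAlgebra.ι Q (e 0) * CliffordAlgebra.ι Q (e 1)) -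
        (Q (e 0) * Q (e 1)) • (1 : CliffordAlgebra Q) ∧
    (∃ B : Module.Basis (Fin 2) R (CliffordAlgebra.evenOdd Q 0),
      (B 0 : CliffordAlgebra Q) = 1 ∧
      (B 1 : CliffordAlgebra Q) =
        CliffordAlgebra.ι Q (e 0) * CliffordAlgebra.ι Q (e 1)) ∧
    CliffordAlgebra.reverse
        (CliffordAlgebra.ι Q (e 0) * CliffordAlgebra.ι Q (e 1)) =
      QuadraticMap.polar Q (e 0) (e 1) • (1 : CliffordAlgebra Q) -
        CliffordAlgebra.ι Q (e 0) * CliffordAlgebra.ι Q (e 1) ∧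
    ∀ x y : CliffordAlgebra Q, x ∈ CliffordAlgebra.evenOdd Q 0 →
      y ∈ CliffordAlgebra.evenOdd Q 0 → x * y = y * x := by
  refine ⟨mul_self_ι_mul_ι Q _ _, ⟨evenBasis Q e, coe_evenBasis Q e 0, coe_evenBasis Q e 1⟩,
    reverse_ι_mul_ι Q _ _, fun x y hx hy => (commute_of_mem_evenOdd_zero Q e hx hy).eq⟩
end

section
/- Let R be a commutative ring, M a free R-module with basis (e₁, e₂) (so M has rank 2), and Q a quadratic form on M. Then for every v ∈ M and every element a of the even submodule evenOdd Q 0 of CliffordAlgebra Q, one has ι(v) * a = reverse(a) * ι(v) in CliffordAlgebra Q. -/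
/-! In rank 2 every triple product of vectors is palindromic,
`ι v * ι w * ι u = ι u * ι w * ι v`: both sides are trilinear, and on basis vectors the identity
reduces to `ι x * ι x = Q x` being central. Moving `ι w` past an even word `ι m₁ * ι m₂ * x`
therefore reverses the pair `m₁, m₂`, and an induction over even words (carrying the companion
identity `ι w * reverse a = a * ι w`) gives the theorem. -/

open CliffordAlgebra

namespace CliffordAlgebra

variable {R : Type*} [CommRing R] {M : Type*} [AddCommGroup M] [Module R M]
  {Q : QuadraticForm R M}

theorem ι_mul_ι_mul_ι_comm (e : Module.Basis (Fin 2) R M) (v w u : M) :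
    ι Q v * (ι Q w * ι Q u) = ι Q u * (ι Q w * ι Q v) := by
  have hsq (x y : M) : ι Q x * (ι Q x * ι Q y) = ι Q y * (ι Q x * ι Q x) := by
    rw [← mul_assoc, ι_sq_scalar, Algebra.commutes]
  have hrepr (x : M) : x = e.repr x 0 • e 0 + e.repr x 1 • e 1 := by
    simpa only [Fin.sum_univ_two] using (e.sum_repr x).symm
  rw [hrepr v, hrepr w, hrepr u]
  simp only [map_add, map_smul, add_mul, mul_add, smul_mul_assoc, mul_smul_comm]
  rw [hsq (e 0) (e 1), hsq (e 1) (e 0)]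
  module

theorem ι_mul_eq_reverse_mul_ι_and_ι_mul_reverse_eq_mul_ι (e : Module.Basis (Fin 2) R M)
    {a : CliffordAlgebra Q} (ha : a ∈ evenOdd Q 0) :
    (∀ w, ι Q w * a = reverse a * ι Q w) ∧ (∀ w, ι Q w * reverse a = a * ι Q w) := by
  induction a, ha using even_induction with
  | algebraMap r => simp [Algebra.commutes]
  | add x y _ _ ihx ihy =>
    exact ⟨fun w => by rw [map_add, mul_add, add_mul, ihx.1, ihy.1],
      fun w => by rw [map_add, mul_add, add_mul, ihx.2, ihy.2]⟩
  | ι_mul_ι_mul m₁ m₂ x _ ih =>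
    obtain ⟨ih₁, ih₂⟩ := ih
    have hrev : reverse (ι Q m₁ * ι Q m₂ * x) = reverse x * (ι Q m₂ * ι Q m₁) := by
      simp only [reverse.map_mul, reverse_ι, mul_assoc]
    refine ⟨fun w => ?_, fun w => ?_⟩
    · calc ι Q w * (ι Q m₁ * ι Q m₂ * x)
          = ι Q m₂ * (ι Q m₁ * (ι Q w * x)) := by
            rw [← mul_assoc, ← mul_assoc, mul_assoc (ι Q w), ι_mul_ι_mul_ι_comm e, mul_assoc,
              mul_assoc]
        _ = reverse x * (ι Q m₂ * ι Q m₁) * ι Q w := by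
            rw [ih₁, ← mul_assoc (ι Q m₁), ih₂]
            simp only [← mul_assoc]
            rw [ih₁]
        _ = _ := by rw [hrev]
    · calc ι Q w * reverse (ι Q m₁ * ι Q m₂ * x)
          = x * (ι Q m₁ * (ι Q m₂ * ι Q w)) := by
            rw [hrev, ← mul_assoc, ih₂, mul_assoc, ι_mul_ι_mul_ι_comm e]
        _ = ι Q m₁ * ι Q m₂ * x * ι Q w := by
            rw [← mul_assoc x, ← ih₂, mul_assoc, ← mul_assoc (reverse x), ← ih₁]
            simp only [mul_assoc]

end CliffordAlgebra

/-- In the Clifford algebra of a binary quadratic form, every vector `ι v`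
conjugates the even part by the reversal involution: `ι v * a = reverse a * ι v`. -/
theorem stmt1 {R : Type*} [CommRing R] {M : Type*} [AddCommGroup M] [Module R M]
    (e : Module.Basis (Fin 2) R M) (Q : QuadraticForm R M)
    (v : M) (a : CliffordAlgebra Q) (ha : a ∈ CliffordAlgebra.evenOdd Q 0) :
    CliffordAlgebra.ι Q v * a = CliffordAlgebra.reverse a * CliffordAlgebra.ι Q v :=
  (ι_mul_eq_reverse_mul_ι_and_ι_mul_reverse_eq_mul_ι e ha).1 v
end

section
/- Let R be a commutative ring, M a free R-module with basis (e₁, e₂) (so M has rank 2), and Q a quadratic form on M. Then the odd submodule evenOdd Q 1 of CliffordAlgebra Q is equal to the image of the canonical map ι : M → CliffordAlgebra Q. Consequently CliffordAlgebra Q decomposes as an R-module into the internal direct sum of the even subalgebra evenOdd Q 0 and ι(M). -/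
/-!
The odd part of a Clifford algebra is spanned by `ι(M)` together with the products
`ι x * ι y * w` for `w` odd, so it equals `ι(M)` as soon as every product of three vectors is
again a vector. By trilinearity it suffices to check this on triples of generators, and when
`M` is spanned by two vectors two entries of such a triple coincide: then `ι a * ι a = Q a`
and `ι a * ι b * ι a = polar Q b a • ι a - Q a • ι b` finish the argument.
-/

open CliffordAlgebra

theorem Submodule.apply_mem_of_forall_mem_of_span_range_eq_top {R M N ι : Type*} [Semiring R]
    [AddCommMonoid M] [Module R M] [AddCommMonoid N] [Module R N] {e : ι → M}
    (he : Submodule.span R (Set.range e) = ⊤) (f : M →ₗ[R] N) {p : Submodule R N}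
    (h : ∀ i, f (e i) ∈ p) (x : M) : f x ∈ p := by
  have hle : ⊤ ≤ p.comap f := he ▸ Submodule.span_le.mpr (Set.range_subset_iff.mpr h)
  exact hle Submodule.mem_top

namespace CliffordAlgebra

variable {R M : Type*} [CommRing R] [AddCommGroup M] [Module R M] (Q : QuadraticForm R M)

theorem ι_mul_ι_mul_ι_mem_range_of_eq {a b c : M} (h : a = b ∨ b = c ∨ a = c) :
    ι Q a * ι Q b * ι Q c ∈ LinearMap.range (ι Q) := by
  rcases h with rfl | rfl | rfl
  · refine ⟨Q a • c, ?_⟩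
    rw [map_smul, ι_sq_scalar, Algebra.smul_def]
  · refine ⟨Q b • a, ?_⟩
    rw [map_smul, mul_assoc, ι_sq_scalar, Algebra.smul_def, Algebra.commutes]
  · refine ⟨QuadraticMap.polar Q b a • a - Q a • b, ?_⟩
    rw [map_sub, map_smul, map_smul, mul_assoc, ι_mul_ι_comm, mul_sub, ← mul_assoc,
      ι_sq_scalar, Algebra.smul_def, Algebra.smul_def, Algebra.commutes]

open LinearMap in
theorem ι_mul_ι_mul_ι_mem_range_of_span_eq_top {e : Fin 2 → M}
    (he : Submodule.span R (Set.range e) = ⊤) (x y z : M) :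
    ι Q x * ι Q y * ι Q z ∈ range (ι Q) := by
  have generators (i j k : Fin 2) : ι Q (e i) * ι Q (e j) * ι Q (e k) ∈ range (ι Q) :=
    ι_mul_ι_mul_ι_mem_range_of_eq Q <|
      (show i = j ∨ j = k ∨ i = k by omega).imp (congrArg e) (.imp (congrArg e) (congrArg e))
  have in_z (i j : Fin 2) : ι Q (e i) * ι Q (e j) * ι Q z ∈ range (ι Q) :=
    Submodule.apply_mem_of_forall_mem_of_span_range_eq_top he
      ((mulLeft R (ι Q (e i) * ι Q (e j))).comp (ι Q)) (generators i j) z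
  have in_y (i : Fin 2) : ι Q (e i) * ι Q y * ι Q z ∈ range (ι Q) :=
    Submodule.apply_mem_of_forall_mem_of_span_range_eq_top he
      ((mulRight R (ι Q z)).comp ((mulLeft R (ι Q (e i))).comp (ι Q))) (in_z i) y
  exact Submodule.apply_mem_of_forall_mem_of_span_range_eq_top he
    ((mulRight R (ι Q z)).comp ((mulRight R (ι Q y)).comp (ι Q))) in_y x

theorem evenOdd_one_eq_range_ι_of_ι_mul_ι_mul_ι_mem_range
    (h : ∀ x y z : M, ι Q x * ι Q y * ι Q z ∈ LinearMap.range (ι Q)) :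
    evenOdd Q 1 = LinearMap.range (ι Q) := by
  refine le_antisymm (fun w hw => ?_) (range_ι_le_evenOdd_one Q)
  induction w, hw using odd_induction with
  | ι v => exact LinearMap.mem_range_self _ v
  | add _ _ _ _ hx hy => exact add_mem hx hy
  | ι_mul_ι_mul m₁ m₂ _ _ hx =>
    obtain ⟨v, rfl⟩ := hx
    exact h m₁ m₂ v

end CliffordAlgebra

/-- For a binary quadratic form, the odd part of the Clifford algebra is exactly
`ι(M)`, and the Clifford algebra is the internal direct sum of the even part and
`ι(M)`. -/
theorem stmt2 {R : Type*} [CommRing R] {M : Type*} [AddCommGroup M] [Module R M]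
    (e : Module.Basis (Fin 2) R M) (Q : QuadraticForm R M) :
    CliffordAlgebra.evenOdd Q 1 = LinearMap.range (CliffordAlgebra.ι Q) ∧
    IsCompl (CliffordAlgebra.evenOdd Q 0) (LinearMap.range (CliffordAlgebra.ι Q)) := by
  have hodd : evenOdd Q 1 = LinearMap.range (ι Q) :=
    evenOdd_one_eq_range_ι_of_ι_mul_ι_mul_ι_mem_range Q
      (ι_mul_ι_mul_ι_mem_range_of_span_eq_top Q e.span_eq)
  exact ⟨hodd, hodd ▸ evenOdd_isCompl Q⟩
end

section
/- Let L be a free ℤ-module of finite rank, Q : L → ℤ a quadratic form, and L₀ ⊆ L a ℤ-module direct summand of L. Let Q₀ be the restriction of Q to L₀, so that the inclusion L₀ → L is an isometry of quadratic modules, inducing an algebra homomorphism f : CliffordAlgebra Q₀ → CliffordAlgebra Q. Then CliffordAlgebra Q, regarded as a module over CliffordAlgebra Q₀ via f (restriction of scalars along f), is a free CliffordAlgebra Q₀-module. -/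
/-!
Fix an ordered basis `(eᵢ)` of `L` and the triangular bilinear form `B` with `B(eᵢ, eⱼ) = 0`
for `i < j` and `B(x, x) = Q(x)`. The change-of-form isomorphism from the exterior algebra to
`C(Q)` determined by `B` sends `eᵢ₁ ∧ ⋯ ∧ eᵢₖ` (with `i₁ < ⋯ < iₖ`) to the Clifford monomial
`eᵢ₁ ⋯ eᵢₖ`, because every contraction term it produces is `B(eᵢ₁, eᵢₗ) = 0`. Hence the ordered
monomials form a basis of `C(Q)`, for any ordered basis.

Since `L₀` is a direct summand of a finite free module over a PID, `L` has a basis extending a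
basis of `L₀`; order it with the vectors of `L₀` first. Then every ordered monomial is the image
of an `L₀`-monomial times a monomial in the complementary basis vectors, so the latter monomials
form a basis of `C(Q)` over `C(Q₀)`.
-/

open Module

theorem Module.Free.of_basis_smulTower {R A M κ₀ κ₁ : Type*} [CommSemiring R] [Semiring A]
    [Algebra R A] [AddCommMonoid M] [Module A M] [Module R M] [IsScalarTower R A M]
    (bA : Basis κ₀ R A) (v : κ₁ → M) (bM : Basis (κ₀ × κ₁) R M)
    (h : ∀ p, bM p = bA p.1 • v p.2) : Module.Free A M := by
  let Φ := Finsupp.linearCombination A v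
  let e : (Σ _ : κ₁, κ₀) ≃ κ₀ × κ₁ := (Equiv.sigmaEquivProd κ₁ κ₀).trans (Equiv.prodComm _ _)
  have hΦ : Φ.restrictScalars R = ((Finsupp.basis fun _ => bA).equiv bM e).toLinearMap :=
    (Finsupp.basis fun _ => bA).ext fun ix => by
      rw [LinearEquiv.coe_coe, Basis.equiv_apply, h]
      simp [Φ, e]
  have hbij : Function.Bijective Φ := by
    rw [← LinearMap.coe_restrictScalars R Φ, hΦ]
    exact LinearEquiv.bijective _
  exact Module.Free.of_equiv (LinearEquiv.ofBijective Φ hbij)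

theorem Finset.sort_map_toLex_disjSum {α β : Type*} [LinearOrder α] [LinearOrder β]
    (s : Finset α) (t : Finset β) :
    ((s.disjSum t).map toLex.toEmbedding).sort =
      s.sort.map (toLex ∘ Sum.inl) ++ t.sort.map (toLex ∘ Sum.inr) := by
  have hlt : (s.sort.map (toLex ∘ Sum.inl) ++ t.sort.map (toLex ∘ Sum.inr)).Pairwise (· < ·) := by
    rw [List.pairwise_append, List.pairwise_map, List.pairwise_map]
    refine ⟨(Finset.sortedLT_sort s).pairwise.imp ?_, (Finset.sortedLT_sort t).pairwise.imp ?_, ?_⟩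
    all_goals simp
  rw [← (List.toFinset_sort _ hlt.nodup).2 (hlt.imp le_of_lt)]
  congr 1
  ext x
  induction x using Lex.rec with
  | h x => rcases x with a | c <;> simp

theorem Module.Basis.exists_sumLex_of_isCompl_range {R L L₀ : Type*} [CommRing R] [IsDomain R]
    [IsPrincipalIdealRing R] [AddCommGroup L] [Module R L] [Module.Free R L] [Module.Finite R L]
    [AddCommGroup L₀] [Module R L₀] {j : L₀ →ₗ[R] L} (hj : Function.Injective j)
    {C : Submodule R L} (hC : IsCompl (LinearMap.range j) C) :
    ∃ (m k : ℕ) (b₀ : Basis (Fin m) R L₀) (b : Basis (Fin m ⊕ₗ Fin k) R L),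
      ∀ a, b (toLex (Sum.inl a)) = j (b₀ a) := by
  let eJ := LinearEquiv.ofInjective j hj
  let b₀ := ((LinearMap.range j).basisOfPid (Module.finBasis R L)).2.map eJ.symm
  let bC := (C.basisOfPid (Module.finBasis R L)).2
  let e : (L₀ × C) ≃ₗ[R] L :=
    (eJ.prodCongr (LinearEquiv.refl R C)).trans (Submodule.prodEquivOfIsCompl _ _ hC)
  exact ⟨_, _, b₀, ((b₀.prod bC).map e).reindex toLex, fun a => by simp [e, eJ]⟩

section

variable {R M I : Type*} [CommRing R] [AddCommGroup M] [Module R M] [LinearOrder I]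

namespace CliffordAlgebra

variable {Q Q' : QuadraticForm R M} {κ : Type*}

theorem contractLeft_list_prod_map_ι_eq_zero {d : Module.Dual R M} {v : κ → M} {l : List κ}
    (hd : ∀ i ∈ l, d (v i) = 0) : contractLeft d (l.map fun i => ι Q (v i)).prod = 0 := by
  induction l with
  | nil => simp
  | cons i l ih =>
    simp only [List.forall_mem_cons] at hd
    rw [List.map_cons, List.prod_cons, contractLeft_ι_mul, hd.1, ih hd.2, zero_smul, mul_zero,
      sub_zero]

theorem changeForm_list_prod_map_ι {B : LinearMap.BilinForm R M}
    (h : B.toQuadraticMap = Q' - Q) {v : κ → M} {l : List κ}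
    (hl : l.Pairwise fun i j => B (v i) (v j) = 0) :
    changeForm h (l.map fun i => ι Q (v i)).prod = (l.map fun i => ι Q' (v i)).prod := by
  induction l with
  | nil => simp [changeForm_one]
  | cons i l ih =>
    rw [List.pairwise_cons] at hl
    rw [List.map_cons, List.prod_cons, changeForm_ι_mul, ih hl.2,
      contractLeft_list_prod_map_ι_eq_zero hl.1, sub_zero, List.map_cons, List.prod_cons]

end CliffordAlgebra

theorem ExteriorAlgebra.basis_apply_eq_prod_sort (b : Basis I R M) (s : Finset I) :
    b.ExteriorAlgebra s = (s.sort.map fun i => ExteriorAlgebra.ι R (b i)).prod := by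
  rw [ExteriorAlgebra.basis_apply_ofCard b rfl, ExteriorAlgebra.ιMulti_family,
    ExteriorAlgebra.ιMulti_apply, List.ofFn_eq_map,
    ← Finset.listMap_orderEmbOfFin_finRange s rfl, List.map_map]
  rfl

namespace QuadraticMap

variable (Q : QuadraticForm R M) (b : Basis I R M)

theorem toQuadraticMap_flip_toBilin :
    LinearMap.BilinMap.toQuadraticMap (Q.toBilin b).flip = Q := by
  ext x
  simpa using DFunLike.congr_fun (Q.toQuadraticMap_toBilin b) x

theorem toBilin_flip_apply_of_lt {i j : I} (hij : i < j) : (Q.toBilin b).flip (b i) (b j) = 0 := by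
  rw [LinearMap.flip_apply, toBilin_apply, if_neg hij.ne', if_neg (not_lt.2 hij.le)]

end QuadraticMap

noncomputable def Module.Basis.cliffordAlgebra (b : Basis I R M) (Q : QuadraticForm R M) :
    Basis (Finset I) R (CliffordAlgebra Q) :=
  b.ExteriorAlgebra.map <| CliffordAlgebra.changeFormEquiv <|
    (Q.toQuadraticMap_flip_toBilin b).trans (sub_zero Q).symm

theorem Module.Basis.cliffordAlgebra_apply (b : Basis I R M) (Q : QuadraticForm R M)
    (s : Finset I) :
    b.cliffordAlgebra Q s = (s.sort.map fun i => CliffordAlgebra.ι Q (b i)).prod := by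
  rw [Module.Basis.cliffordAlgebra, Basis.map_apply, ExteriorAlgebra.basis_apply_eq_prod_sort]
  exact CliffordAlgebra.changeForm_list_prod_map_ι
    ((Q.toQuadraticMap_flip_toBilin b).trans (sub_zero Q).symm)
    ((Finset.sortedLT_sort s).pairwise.imp (Q.toBilin_flip_apply_of_lt b))

theorem CliffordAlgebra.free_map_of_basis_sumLex {M₀ ι₀ ι₁ : Type*} [AddCommGroup M₀]
    [Module R M₀] [LinearOrder ι₀] [LinearOrder ι₁] {Q₀ : QuadraticForm R M₀}
    {Q : QuadraticForm R M} (f : Q₀ →qᵢ Q) (b₀ : Basis ι₀ R M₀) (b : Basis (ι₀ ⊕ₗ ι₁) R M)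
    (hb : ∀ a, b (toLex (Sum.inl a)) = f (b₀ a)) :
    @Module.Free (CliffordAlgebra Q₀) (CliffordAlgebra Q) _ _
      (Module.compHom (CliffordAlgebra Q) (CliffordAlgebra.map f).toRingHom) := by
  let := Module.compHom (CliffordAlgebra Q) (CliffordAlgebra.map f).toRingHom
  have : IsScalarTower R (CliffordAlgebra Q₀) (CliffordAlgebra Q) :=
    ⟨fun r x y => show map f (r • x) * y = r • (map f x * y) by rw [map_smul, smul_mul_assoc]⟩
  refine Module.Free.of_basis_smulTower (b₀.cliffordAlgebra Q₀)
    (fun t => (t.sort.map fun c => ι Q (b (toLex (Sum.inr c)))).prod)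
    ((b.cliffordAlgebra Q).reindex ((Equiv.finsetCongr ofLex).trans Finset.sumEquiv.toEquiv))
    fun p => ?_
  have hsymm : ((Equiv.finsetCongr ofLex).trans Finset.sumEquiv.toEquiv).symm p =
      (p.1.disjSum p.2).map toLex.toEmbedding := rfl
  rw [Basis.reindex_apply, hsymm, Basis.cliffordAlgebra_apply, Finset.sort_map_toLex_disjSum,
    List.map_append, List.prod_append, List.map_map, List.map_map, Basis.cliffordAlgebra_apply]
  change _ = map f _ * _
  rw [map_list_prod, List.map_map]
  congr 2
  ext a
  simp [hb]

end

/-- If `L₀ → L` is the inclusion of a `ℤ`-module direct summand of the finite free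
`ℤ`-module `L` (formalized as an injective linear map `j` whose range is a direct
summand), `Q` a quadratic form on `L` and `Q₀ = Q ∘ j` its restriction to `L₀`, then
`CliffordAlgebra Q` is free as a module over `CliffordAlgebra Q₀`, the module
structure being restriction of scalars along the algebra map `CliffordAlgebra.map`
induced by the isometry `j : (L₀, Q₀) → (L, Q)`. -/
theorem stmt3 {L : Type*} [AddCommGroup L] [Module ℤ L]
    [Module.Free ℤ L] [Module.Finite ℤ L]
    {L₀ : Type*} [AddCommGroup L₀] [Module ℤ L₀]
    (Q : QuadraticForm ℤ L) (j : L₀ →ₗ[ℤ] L) (hj : Function.Injective j)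
    (hsummand : ∃ C : Submodule ℤ L, IsCompl (LinearMap.range j) C)
    (incl : (Q.comp j) →qᵢ Q) (hincl : incl.toLinearMap = j) :
    @Module.Free (CliffordAlgebra (Q.comp j)) (CliffordAlgebra Q) _ _
      (Module.compHom (CliffordAlgebra Q)
        (CliffordAlgebra.map incl).toRingHom) := by
  obtain ⟨C, hC⟩ := hsummand
  obtain ⟨m, k, b₀, b, hb⟩ := Module.Basis.exists_sumLex_of_isCompl_range hj hC
  exact CliffordAlgebra.free_map_of_basis_sumLex incl b₀ b fun a =>
    (hb a).trans (LinearMap.congr_fun hincl _).symm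
end
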